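/- Let F : ℝ³ → ℝ^{3×3} satisfy |F(x)| ≤ C(1+|x|)^{-2}. Define W(x) = ∫₀¹ ∫_{ℝ³} ∇S(x-y, 1-s) s^{-1} F(y/√s) dy ds where S is the Oseen kernel with |∇S(x,t)| ≤ C(√t+|x|)^{-4}. Then |W(x)| ≤ C(1+|x|)^{-2} for all x ∈ ℝ³. -/

import Mathlib

open MeasureTheory Filter Topology ENNReal NNReal

noncomputable section

abbrev E3 := EuclideanSpace ℝ (Fin 3)

/-!
Write `a = √(1 - s)` and `b = √s`, so that `a + b ≥ 1`. The integrand at time `s` is bounded by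
`C₁ C₂ P⁻⁴ Q⁻²` with `P = a + |x - y|`, `Q = b + |y|`, and `P + Q ≥ 1 + |x|`. Hence one of `P`, `Q`
is at least `(1 + |x|)/2`, which gives `P⁻⁴ Q⁻² ≤ ((1 + |x|)/2)⁻² (P⁻⁴ + Q⁻⁴)`; this replaces the
splitting of the `y`-integral into three regions. By scaling, `∫ (t + |z|)⁻⁴ dz = c t⁻¹` in `ℝ³`,
so the `y`-integral is `O((1 + |x|)⁻² (a⁻¹ + b⁻¹))`, and `∫₀¹ (s^{-1/2} + (1 - s)^{-1/2}) ds = 4`.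
-/

open Module

theorem rpow_neg_mul_rpow_neg_le {P Q R a b : ℝ} (hP : 0 < P) (hQ : 0 < Q) (hR : 0 < R)
    (hRPQ : R ≤ P + Q) (hb : 0 ≤ b) (hba : b ≤ a) :
    P ^ (-a) * Q ^ (-b) ≤ (R / 2) ^ (-b) * (P ^ (-a) + Q ^ (-a)) := by
  have hPa : 0 ≤ P ^ (-a) := by positivity
  have hQa : 0 ≤ Q ^ (-a) := by positivity
  have hR2 : 0 < R / 2 := by positivity
  rcases le_or_gt (R / 2) Q with hQR | hQR
  · calc P ^ (-a) * Q ^ (-b) ≤ P ^ (-a) * (R / 2) ^ (-b) :=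
          mul_le_mul_of_nonneg_left (Real.rpow_le_rpow_of_nonpos hR2 hQR (neg_nonpos.2 hb)) hPa
      _ ≤ _ := by nlinarith [Real.rpow_nonneg hR2.le (-b)]
  · have hPQ : Q ≤ P := by linarith
    calc P ^ (-a) * Q ^ (-b) = P ^ (-b) * (P ^ (b - a) * Q ^ (-b)) := by
          rw [← mul_assoc, ← Real.rpow_add hP]; ring_nf
      _ ≤ P ^ (-b) * (Q ^ (b - a) * Q ^ (-b)) := by
          gcongr ?_ * (?_ * _)
          exact Real.rpow_le_rpow_of_nonpos hQ hPQ (sub_nonpos.2 hba)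
      _ = P ^ (-b) * Q ^ (-a) := by rw [← Real.rpow_add hQ]; ring_nf
      _ ≤ (R / 2) ^ (-b) * Q ^ (-a) := by
          gcongr ?_ * _
          exact Real.rpow_le_rpow_of_nonpos hR2 (by linarith) (neg_nonpos.2 hb)
      _ ≤ _ := by nlinarith [Real.rpow_nonneg hR2.le (-b)]

theorem add_norm_rpow_neg_eq {E : Type*} [SeminormedAddCommGroup E] [NormedSpace ℝ E]
    {t : ℝ} (ht : 0 < t) (r : ℝ) (z : E) :
    (t + ‖z‖) ^ (-r) = t ^ (-r) * (1 + ‖t⁻¹ • z‖) ^ (-r) := by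
  rw [← Real.mul_rpow ht.le (by positivity), norm_smul, norm_inv, Real.norm_of_nonneg ht.le,
    mul_add, mul_inv_cancel_left₀ ht.ne', mul_one]

section Scaling

variable {E : Type*} [NormedAddCommGroup E] [NormedSpace ℝ E] [FiniteDimensional ℝ E]
  [MeasurableSpace E] [BorelSpace E] (μ : Measure E) [μ.IsAddHaarMeasure]

theorem integrable_add_norm_rpow_neg {t r : ℝ} (ht : 0 < t) (hr : (finrank ℝ E : ℝ) < r) :
    Integrable (fun z : E ↦ (t + ‖z‖) ^ (-r)) μ := by
  simp_rw [add_norm_rpow_neg_eq ht]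
  exact ((integrable_one_add_norm hr).comp_smul (inv_ne_zero ht.ne')).const_mul _

theorem integral_add_norm_rpow_neg {t : ℝ} (ht : 0 < t) (r : ℝ) :
    ∫ z, (t + ‖z‖) ^ (-r) ∂μ = t ^ ((finrank ℝ E : ℝ) - r) * ∫ z, (1 + ‖z‖) ^ (-r) ∂μ := by
  simp_rw [add_norm_rpow_neg_eq ht, integral_const_mul,
    Measure.integral_comp_inv_smul_of_nonneg μ (fun z ↦ (1 + ‖z‖) ^ (-r)) ht.le, smul_eq_mul,
    sub_eq_neg_add, Real.rpow_add ht, Real.rpow_natCast, mul_assoc]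

end Scaling

theorem intervalIntegrable_rpow_add_one_sub_rpow {r : ℝ} (hr : -1 < r) :
    IntervalIntegrable (fun s : ℝ ↦ s ^ r + (1 - s) ^ r) volume 0 1 := by
  have h := intervalIntegral.intervalIntegrable_rpow' (a := 0) (b := 1) hr
  exact h.add (by simpa using (h.comp_sub_left 1).symm)

theorem integral_rpow_add_one_sub_rpow {r : ℝ} (hr : -1 < r) :
    ∫ s in (0 : ℝ)..1, (s ^ r + (1 - s) ^ r) = 2 / (r + 1) := by
  have h := intervalIntegral.intervalIntegrable_rpow' (a := 0) (b := 1) hr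
  rw [intervalIntegral.integral_add h (by simpa using (h.comp_sub_left 1).symm),
    intervalIntegral.integral_comp_sub_left (fun s ↦ s ^ r), sub_self, sub_zero,
    integral_rpow (Or.inl hr), Real.zero_rpow (by linarith), Real.one_rpow]
  ring

theorem integrableOn_Ioo_rpow_add_one_sub_rpow {r : ℝ} (hr : -1 < r) :
    IntegrableOn (fun s : ℝ ↦ s ^ r + (1 - s) ^ r) (Set.Ioo 0 1) :=
  (intervalIntegrable_iff_integrableOn_Ioo_of_le zero_le_one).1
    (intervalIntegrable_rpow_add_one_sub_rpow hr)

theorem setIntegral_Ioo_rpow_add_one_sub_rpow {r : ℝ} (hr : -1 < r) :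
    ∫ s in Set.Ioo (0 : ℝ) 1, (s ^ r + (1 - s) ^ r) = 2 / (r + 1) := by
  rw [← integral_Ioc_eq_integral_Ioo, ← intervalIntegral.integral_of_le zero_le_one,
    integral_rpow_add_one_sub_rpow hr]

theorem one_le_sqrt_add_sqrt_one_sub {s : ℝ} (hs₀ : 0 ≤ s) (hs₁ : s ≤ 1) :
    1 ≤ √s + √(1 - s) := by
  have h₀ := Real.sq_sqrt hs₀
  have h₁ := Real.sq_sqrt (sub_nonneg.2 hs₁)
  nlinarith [Real.sqrt_nonneg s, Real.sqrt_nonneg (1 - s)]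

section Duhamel

variable {K : E3 → ℝ → (E3 →L[ℝ] E3)} {F : E3 → E3} {C₁ C₂ : ℝ}

theorem norm_duhamel_integrand_le (hC₁ : 0 ≤ C₁)
    (hK : ∀ (z : E3) (t : ℝ), 0 < t → ‖K z t‖ ≤ C₁ * (√t + ‖z‖) ^ (-(4:ℝ)))
    (hF : ∀ y : E3, ‖F y‖ ≤ C₂ * (1 + ‖y‖) ^ (-(2:ℝ))) {s : ℝ} (hs : s ∈ Set.Ioo (0:ℝ) 1)
    (x y : E3) :
    ‖s⁻¹ • (K (x - y) (1 - s)) (F ((√s)⁻¹ • y))‖ ≤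
      C₁ * C₂ * ((√(1 - s) + ‖x - y‖) ^ (-(4:ℝ)) * (√s + ‖y‖) ^ (-(2:ℝ))) := by
  have hb : 0 < √s := Real.sqrt_pos.2 hs.1
  have hF' : s⁻¹ * ‖F ((√s)⁻¹ • y)‖ ≤ C₂ * (√s + ‖y‖) ^ (-(2:ℝ)) := by
    rw [add_norm_rpow_neg_eq hb, Real.rpow_neg hb.le, Real.rpow_two, Real.sq_sqrt hs.1.le]
    calc s⁻¹ * ‖F ((√s)⁻¹ • y)‖ ≤ s⁻¹ * (C₂ * (1 + ‖(√s)⁻¹ • y‖) ^ (-(2:ℝ))) :=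
          mul_le_mul_of_nonneg_left (hF _) (inv_nonneg.2 hs.1.le)
      _ = _ := by ring
  calc ‖s⁻¹ • (K (x - y) (1 - s)) (F ((√s)⁻¹ • y))‖
      ≤ ‖K (x - y) (1 - s)‖ * (s⁻¹ * ‖F ((√s)⁻¹ • y)‖) := by
        rw [norm_smul, Real.norm_of_nonneg (inv_nonneg.2 hs.1.le), mul_left_comm]
        exact mul_le_mul_of_nonneg_left ((K (x - y) (1 - s)).le_opNorm _) (inv_nonneg.2 hs.1.le)
    _ ≤ (C₁ * (√(1 - s) + ‖x - y‖) ^ (-(4:ℝ))) * (C₂ * (√s + ‖y‖) ^ (-(2:ℝ))) :=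
        mul_le_mul (hK _ _ (sub_pos.2 hs.2)) hF'
          (mul_nonneg (inv_nonneg.2 hs.1.le) (norm_nonneg _)) (mul_nonneg hC₁ (by positivity))
    _ = _ := by ring

theorem norm_integral_duhamel_integrand_le (hC₁ : 0 ≤ C₁) (hC₂ : 0 ≤ C₂)
    (hK : ∀ (z : E3) (t : ℝ), 0 < t → ‖K z t‖ ≤ C₁ * (√t + ‖z‖) ^ (-(4:ℝ)))
    (hF : ∀ y : E3, ‖F y‖ ≤ C₂ * (1 + ‖y‖) ^ (-(2:ℝ))) {s : ℝ} (hs : s ∈ Set.Ioo (0:ℝ) 1)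
    (x : E3) :
    ‖∫ y, s⁻¹ • (K (x - y) (1 - s)) (F ((√s)⁻¹ • y))‖ ≤
      4 * C₁ * C₂ * (∫ z : E3, (1 + ‖z‖) ^ (-(4:ℝ))) * (1 + ‖x‖) ^ (-(2:ℝ)) *
        (s ^ (-(1/2) : ℝ) + (1 - s) ^ (-(1/2) : ℝ)) := by
  have ha : 0 < √(1 - s) := Real.sqrt_pos.2 (sub_pos.2 hs.2)
  have hb : 0 < √s := Real.sqrt_pos.2 hs.1
  have hdim : (finrank ℝ E3 : ℝ) < 4 := by norm_num
  have hI₁ : Integrable (fun y : E3 ↦ (√(1 - s) + ‖x - y‖) ^ (-(4:ℝ))) :=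
    (integrable_add_norm_rpow_neg volume ha hdim).comp_sub_left x
  have hI₂ : Integrable (fun y : E3 ↦ (√s + ‖y‖) ^ (-(4:ℝ))) :=
    integrable_add_norm_rpow_neg volume hb hdim
  have hsplit : ∀ y : E3, ‖s⁻¹ • (K (x - y) (1 - s)) (F ((√s)⁻¹ • y))‖ ≤
      C₁ * C₂ * ((1 + ‖x‖) / 2) ^ (-(2:ℝ)) *
        ((√(1 - s) + ‖x - y‖) ^ (-(4:ℝ)) + (√s + ‖y‖) ^ (-(4:ℝ))) := by
    intro y
    rw [mul_assoc _ (((1 + ‖x‖) / 2) ^ (-(2:ℝ)))]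
    refine (norm_duhamel_integrand_le hC₁ hK hF hs x y).trans
      (mul_le_mul_of_nonneg_left (rpow_neg_mul_rpow_neg_le (by positivity) (by positivity)
        (by positivity) ?_ (by norm_num) (by norm_num)) (mul_nonneg hC₁ hC₂))
    linarith [norm_le_norm_add_norm_sub' x y, one_le_sqrt_add_sqrt_one_sub hs.1.le hs.2.le]
  have hI : Integrable (fun y : E3 ↦ C₁ * C₂ * ((1 + ‖x‖) / 2) ^ (-(2:ℝ)) *
      ((√(1 - s) + ‖x - y‖) ^ (-(4:ℝ)) + (√s + ‖y‖) ^ (-(4:ℝ)))) :=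
    (hI₁.add hI₂).const_mul _
  refine (norm_integral_le_of_norm_le hI (ae_of_all _ hsplit)).trans_eq ?_
  rw [integral_const_mul, integral_add hI₁ hI₂,
    integral_sub_left_eq_self (fun z : E3 ↦ (√(1 - s) + ‖z‖) ^ (-(4:ℝ))) volume x,
    integral_add_norm_rpow_neg volume ha, integral_add_norm_rpow_neg volume hb]
  have hsqrt : ∀ u : ℝ, 0 ≤ u → √u ^ ((finrank ℝ E3 : ℝ) - 4) = u ^ (-(1/2) : ℝ) := by
    intro u hu
    rw [finrank_euclideanSpace_fin, Real.sqrt_eq_rpow, ← Real.rpow_mul hu]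
    norm_num
  have hhalf : ((1 + ‖x‖) / 2) ^ (-(2:ℝ)) = 4 * (1 + ‖x‖) ^ (-(2:ℝ)) := by
    rw [Real.div_rpow (by positivity) zero_le_two, Real.rpow_neg zero_le_two]
    norm_num
    ring
  rw [hsqrt _ (sub_pos.2 hs.2).le, hsqrt _ hs.1.le, hhalf]
  ring

end Duhamel

theorem stokes_duhamel_decay_general
    (K : E3 → ℝ → (E3 →L[ℝ] E3))   -- the kernel `∇S`
    (C₁ : ℝ) (hC₁ : 0 < C₁)
    (hK : ∀ (z : E3) (t : ℝ), 0 < t → ‖K z t‖ ≤ C₁ * (Real.sqrt t + ‖z‖) ^ (-(4:ℝ)))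
    (F : E3 → E3)
    (C₂ : ℝ) (hC₂ : 0 < C₂)
    (hF : ∀ y : E3, ‖F y‖ ≤ C₂ * (1 + ‖y‖) ^ (-(2:ℝ)))
    (W : E3 → E3)
    (hW : W = fun x => ∫ s in Set.Ioo (0:ℝ) 1,
      ∫ y, s⁻¹ • (K (x - y) (1 - s)) (F ((Real.sqrt s)⁻¹ • y))) :
    ∃ C : ℝ, 0 < C ∧ ∀ x : E3, ‖W x‖ ≤ C * (1 + ‖x‖) ^ (-(2:ℝ)) := by
  set c := ∫ z : E3, (1 + ‖z‖) ^ (-(4:ℝ))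
  have hc : 0 ≤ c := integral_nonneg fun z ↦ by positivity
  refine ⟨16 * C₁ * C₂ * c + 1, by positivity, fun x ↦ ?_⟩
  have hr : (-1 : ℝ) < -(1/2) := by norm_num
  calc ‖W x‖
      ≤ ∫ s in Set.Ioo (0:ℝ) 1, 4 * C₁ * C₂ * c * (1 + ‖x‖) ^ (-(2:ℝ)) *
          (s ^ (-(1/2) : ℝ) + (1 - s) ^ (-(1/2) : ℝ)) := by
        rw [hW]
        refine norm_integral_le_of_norm_le
          ((integrableOn_Ioo_rpow_add_one_sub_rpow hr).const_mul _) ?_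
        exact (ae_restrict_iff' measurableSet_Ioo).2 <| ae_of_all _ fun s hs ↦
          norm_integral_duhamel_integrand_le hC₁.le hC₂.le hK hF hs x
    _ = 16 * C₁ * C₂ * c * (1 + ‖x‖) ^ (-(2:ℝ)) := by
        rw [integral_const_mul, setIntegral_Ioo_rpow_add_one_sub_rpow hr]
        ring
    _ ≤ (16 * C₁ * C₂ * c + 1) * (1 + ‖x‖) ^ (-(2:ℝ)) := by gcongr; linarith

/-- Decay of the Duhamel integral at time 1 for the Stokes system with a self-similar
singular force: if `|F(x)| ≤ C(1+|x|)^{-2}` and the (gradient of the) Oseen kernel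
satisfies `|∇S(z,t)| ≤ C(√t + |z|)^{-4}`, then
`W(x) = ∫₀¹∫ ∇S(x-y, 1-s) s⁻¹ F(y/√s) dy ds` satisfies `|W(x)| ≤ C(1+|x|)^{-2}`. -/
theorem stokes_duhamel_decay
    (K : E3 → ℝ → (E3 →L[ℝ] E3))   -- the kernel `∇S`
    (hKmeas : StronglyMeasurable fun p : E3 × ℝ => K p.1 p.2)
    (C₁ : ℝ) (hC₁ : 0 < C₁)
    (hK : ∀ (z : E3) (t : ℝ), 0 < t → ‖K z t‖ ≤ C₁ * (Real.sqrt t + ‖z‖) ^ (-(4:ℝ)))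
    (F : E3 → E3) (hFcont : Continuous F)
    (C₂ : ℝ) (hC₂ : 0 < C₂)
    (hF : ∀ y : E3, ‖F y‖ ≤ C₂ * (1 + ‖y‖) ^ (-(2:ℝ)))
    (W : E3 → E3)
    (hW : W = fun x => ∫ s in Set.Ioo (0:ℝ) 1,
      ∫ y, s⁻¹ • (K (x - y) (1 - s)) (F ((Real.sqrt s)⁻¹ • y))) :
    ∃ C : ℝ, 0 < C ∧ ∀ x : E3, ‖W x‖ ≤ C * (1 + ‖x‖) ^ (-(2:ℝ)) :=
  stokes_duhamel_decay_general K C₁ hC₁ hK F C₂ hC₂ hF W hW
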